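/- arXiv:1604.07587 — 2 statements merged into one kernel-verified Lean document; each statement's English description precedes it below -/
import Mathlib

section
/- Let $T: \ell_1 \to \ell_1$ be the shift-type operator defined on the closed span $Z$ of $\{e^*, e_{n_1}^*, e_{n_2}^*, \ldots\}$ by $T(t_0 e^* + \sum_{j=1}^\infty t_j e_{n_j}^*) = \sum_{j=1}^\infty t_{j-1} e_{n_j}^*$, where $\sum_{j=1}^\infty |e^*(n_j)| < \frac{1}{4}\|e^*\|$ and $e^* \neq 0$. Then $T$ is well-defined and linear, and the restriction of $T$ to the set $K = \{\alpha_0 e^* + \sum_{k\ge1}\alpha_k e_{n_k}^* : \alpha_i \ge 0, \sum\alpha_i = 1\}$ maps $K$ into $K$ and has no fixed point in $K$. -/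
open Filter Topology ENNReal NormedSpace

noncomputable section

instance : Fact ((1:ℝ≥0∞) ≤ 1) := ⟨le_rfl⟩

/-- The space `ℓ₁` of absolutely summable real sequences. -/
abbrev ell1 : Type := lp (fun _ : ℕ => ℝ) 1

/-- The standard unit vector basis of `ℓ₁`. -/
def basisv (i : ℕ) : ell1 := lp.single 1 i (1:ℝ)

/-- The weak-star topology `σ(ℓ₁, X)` on `ℓ₁` induced by a predual `X` via an
isometric identification `e` of the dual of `X` with `ℓ₁`. -/
def wstar (X : Type*) [NormedAddCommGroup X] [NormedSpace ℝ X]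
    (e : StrongDual ℝ X ≃ₗᵢ[ℝ] ell1) : TopologicalSpace ell1 :=
  TopologicalSpace.induced (fun y => StrongDual.toWeakDual (e.symm y)) inferInstance

/-- The weak-star topology `σ(Y*, Y)` on the dual of a normed space `Y`. -/
def wsDual (Y : Type*) [NormedAddCommGroup Y] [NormedSpace ℝ Y] :
    TopologicalSpace (StrongDual ℝ Y) :=
  TopologicalSpace.induced (fun φ : StrongDual ℝ Y => StrongDual.toWeakDual φ)
    inferInstance

/-!
Since `∑ⱼ |e*(nⱼ)| < ‖e*‖`, the vector `e*` has a nonzero coordinate `m` outside `{nⱼ}`.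
Reading off the coordinates `m` and `nⱼ` recovers the coefficients of
`x = t₀ e* + ∑ⱼ tⱼ₊₁ e_{nⱼ}` as `t₀ = x m / e*(m)` and `tⱼ₊₁ = x(nⱼ) - t₀ e*(nⱼ)`. These formulas
make sense on all of `ℓ₁`, so they define a linear map `T` sending `x` to `∑ⱼ tⱼ e_{nⱼ}`.
On coefficient sequences `T` is the right shift `(t₀, t₁, …) ↦ (0, t₀, t₁, …)`, which preserves
the probability simplex and fixes only the zero sequence.
-/

open Function

namespace lp

variable {α ι : Type*} {E : α → Type*} [∀ i, NormedAddCommGroup (E i)] {p : ℝ≥0∞} [Fact (1 ≤ p)]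

theorem tsum_apply {f : ι → lp E p} (hf : Summable f) (i : α) :
    (∑' k, f k) i = ∑' k, f k i := by
  have hcoe := hf.hasSum.map (coeFnAddMonoidHom E p) uniformContinuous_coe.continuous
  exact (Pi.hasSum.mp hcoe i).tsum_eq.symm

end lp

section ShiftRight

variable {M : Type*} [AddCommGroup M]

def shiftRight (t : ℕ → M) : ℕ → M
  | 0 => 0
  | k + 1 => t k

lemma shiftRight_eq_self {t : ℕ → M} : shiftRight t = t ↔ t = 0 := by
  refine ⟨fun h => funext fun k => ?_, fun h => funext fun k => by cases k <;> simp [shiftRight, h]⟩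
  induction k with
  | zero => exact (congrFun h 0).symm
  | succ k ih => rw [← congrFun h (k + 1)]; exact ih

lemma summable_shiftRight_iff [TopologicalSpace M] [IsTopologicalAddGroup M] {t : ℕ → M} :
    Summable (shiftRight t) ↔ Summable t :=
  (summable_nat_add_iff (f := shiftRight t) 1).symm

lemma tsum_shiftRight [TopologicalSpace M] [T2Space M] [ContinuousAdd M] {t : ℕ → M}
    (ht : Summable t) : ∑' k, shiftRight t k = ∑' k, t k := by
  rw [tsum_eq_zero_add' ht, shiftRight, zero_add]
  rfl

end ShiftRight

lemma basisv_apply_self (i : ℕ) : basisv i i = 1 := lp.single_apply_self _ _ _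

lemma basisv_apply_of_ne {i j : ℕ} (h : j ≠ i) : basisv i j = 0 := lp.single_apply_ne _ _ _ h

lemma norm_basisv (i : ℕ) : ‖basisv i‖ = 1 := by
  simp [basisv, lp.norm_single (E := fun _ : ℕ => ℝ) (p := 1) (by simp) i (1:ℝ)]

namespace ell1

lemma hasSum_abs (x : ell1) : HasSum (fun i => |x i|) ‖x‖ := by
  simpa using lp.hasSum_norm (E := fun _ : ℕ => ℝ) (p := 1) (by simp) x

lemma summable_abs (x : ell1) : Summable fun i => |x i| := (hasSum_abs x).summable

section Series

variable {n : ℕ → ℕ} {a : ℕ → ℝ}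

lemma summable_smul_basisv (ha : Summable fun j => |a j|) :
    Summable fun k => a k • basisv (n k) :=
  .of_norm <| by simpa [norm_smul, norm_basisv] using ha

lemma tsum_smul_basisv_apply (ha : Summable fun j => |a j|) (i : ℕ) :
    (∑' k, a k • basisv (n k)) i = ∑' k, a k * basisv (n k) i :=
  lp.tsum_apply (summable_smul_basisv ha) i

lemma tsum_smul_basisv_apply_self (hn : Injective n) (ha : Summable fun j => |a j|) (j : ℕ) :
    (∑' k, a k • basisv (n k)) (n j) = a j := by
  rw [tsum_smul_basisv_apply ha, tsum_eq_single j]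
  · rw [basisv_apply_self, mul_one]
  · intro k hk
    rw [basisv_apply_of_ne fun h => hk (hn h).symm, mul_zero]

lemma tsum_smul_basisv_apply_of_notMem (ha : Summable fun j => |a j|) {i : ℕ}
    (hi : i ∉ Set.range n) : (∑' k, a k • basisv (n k)) i = 0 := by
  rw [tsum_smul_basisv_apply ha]
  simp [basisv_apply_of_ne fun h : i = n _ => hi ⟨_, h.symm⟩]

lemma exists_apply_ne_zero_notMem_range {x : ell1} (hn : Injective n)
    (hx : ∑' j, |x (n j)| < ‖x‖) : ∃ m ∉ Set.range n, x m ≠ 0 := by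
  by_contra! hzero
  have hsupp : support (fun i => |x i|) ⊆ Set.range n := fun i hi => by
    by_contra hi'
    exact hi (by simp [hzero i hi'])
  have : ∑' j, |x (n j)| = ‖x‖ :=
    (hn.tsum_eq (f := fun i => |x i|) hsupp).trans (hasSum_abs x).tsum_eq
  exact hx.ne this

end Series

section Expansion

variable (e : ell1) (n : ℕ → ℕ) (m : ℕ)

def expansion (t : ℕ → ℝ) : ell1 := t 0 • e + ∑' k, t (k + 1) • basisv (n k)

def coeffs (x : ell1) : ℕ → ℝ
  | 0 => x m / e m
  | k + 1 => x (n k) - x m / e m * e (n k)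

variable {e n m}

lemma coeffs_expansion (hn : Injective n) (hm : m ∉ Set.range n) (he : e m ≠ 0)
    {t : ℕ → ℝ} (ht : Summable fun j => |t j|) : coeffs e n m (expansion e n t) = t := by
  have htail : Summable fun j => |t (j + 1)| := (summable_nat_add_iff 1).mpr ht
  have hcoord : expansion e n t m = t 0 * e m := by
    have := tsum_smul_basisv_apply_of_notMem (n := n) htail hm
    simp only [expansion, lp.coeFn_add, lp.coeFn_smul, Pi.add_apply, Pi.smul_apply, smul_eq_mul,
      this, add_zero]
  funext k
  cases k with
  | zero => simp [coeffs, hcoord, he]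
  | succ j =>
    simp only [coeffs, hcoord, mul_div_cancel_right₀ _ he]
    have := tsum_smul_basisv_apply_self hn htail j
    simp only [expansion, lp.coeFn_add, lp.coeFn_smul, Pi.add_apply, Pi.smul_apply, smul_eq_mul,
      this]
    ring

lemma expansion_inj (hn : Injective n) (hm : m ∉ Set.range n) (he : e m ≠ 0)
    {t s : ℕ → ℝ} (ht : Summable fun j => |t j|) (hs : Summable fun j => |s j|)
    (h : expansion e n t = expansion e n s) : t = s := by
  rw [← coeffs_expansion hn hm he ht, h, coeffs_expansion hn hm he hs]

lemma expansion_mem_closure_span {t : ℕ → ℝ} (ht : Summable fun j => |t j|) :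
    expansion e n t ∈
      (Submodule.span ℝ ({e} ∪ Set.range fun j => basisv (n j))).topologicalClosure := by
  set S := Submodule.span ℝ ({e} ∪ Set.range fun j => basisv (n j))
  have hbasisv (k : ℕ) : basisv (n k) ∈ S.topologicalClosure :=
    S.le_topologicalClosure (Submodule.subset_span (Or.inr ⟨k, rfl⟩))
  have htail : Summable fun j => |t (j + 1)| := (summable_nat_add_iff 1).mpr ht
  refine S.topologicalClosure.add_mem (S.topologicalClosure.smul_mem _
    (S.le_topologicalClosure (Submodule.subset_span (Or.inl rfl)))) ?_
  exact S.isClosed_topologicalClosure.mem_of_tendsto (summable_smul_basisv htail).hasSum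
    (.of_forall fun s => S.topologicalClosure.sum_mem fun k _ =>
      S.topologicalClosure.smul_mem _ (hbasisv k))

lemma summable_abs_coeffs (hn : Injective n) (x : ell1) :
    Summable fun k => |coeffs e n m x k| := by
  refine (summable_nat_add_iff 1).mp <| .of_nonneg_of_le (fun _ => abs_nonneg _) (fun k => ?_)
    (((summable_abs x).comp_injective hn).add
      (((summable_abs e).comp_injective hn).mul_left |x m / e m|))
  calc |x (n k) - x m / e m * e (n k)| ≤ |x (n k)| + |x m / e m * e (n k)| := abs_sub _ _
    _ = |x (n k)| + |x m / e m| * |e (n k)| := by rw [abs_mul]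

lemma coeffs_add (x y : ell1) : coeffs e n m (x + y) = coeffs e n m x + coeffs e n m y := by
  funext k
  cases k <;> simp only [coeffs, lp.coeFn_add, Pi.add_apply] <;> ring

lemma coeffs_smul (c : ℝ) (x : ell1) : coeffs e n m (c • x) = c • coeffs e n m x := by
  funext k
  cases k <;> simp only [coeffs, lp.coeFn_smul, Pi.smul_apply, smul_eq_mul] <;> ring

variable (e m) in
def shiftOp (hn : Injective n) : ell1 →ₗ[ℝ] ell1 where
  toFun x := ∑' k, coeffs e n m x k • basisv (n k)
  map_add' x y := by
    simp only [coeffs_add, Pi.add_apply, add_smul]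
    exact (summable_smul_basisv (summable_abs_coeffs hn x)).tsum_add
      (summable_smul_basisv (summable_abs_coeffs hn y))
  map_smul' c x := by
    simp only [coeffs_smul, Pi.smul_apply, smul_eq_mul, RingHom.id_apply, ← smul_smul]
    exact (summable_smul_basisv (summable_abs_coeffs hn x)).tsum_const_smul c

lemma shiftOp_expansion (hn : Injective n) (hm : m ∉ Set.range n) (he : e m ≠ 0)
    {t : ℕ → ℝ} (ht : Summable fun j => |t j|) :
    shiftOp e m hn (expansion e n t) = ∑' k, t k • basisv (n k) := by
  simp only [shiftOp, LinearMap.coe_mk, AddHom.coe_mk, coeffs_expansion hn hm he ht]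

lemma expansion_shiftRight (t : ℕ → ℝ) :
    expansion e n (shiftRight t) = ∑' k, t k • basisv (n k) := by
  simp [expansion, shiftRight]

end Expansion

end ell1

open ell1 in
theorem stmt12_general (estar : ell1) (n : ℕ → ℕ) (hn : StrictMono n)
    (hsmall : ∑' j, |estar (n j)| < ‖estar‖ / 4) :
    let Z : Submodule ℝ ell1 :=
      (Submodule.span ℝ ({estar} ∪ Set.range fun j => basisv (n j))).topologicalClosure
    let K : Set ell1 := {x | ∃ a : ℕ → ℝ, (∀ i, 0 ≤ a i) ∧ Summable a ∧ (∑' i, a i) = 1 ∧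
      x = a 0 • estar + ∑' k, a (k + 1) • basisv (n k)}
    (∀ t s : ℕ → ℝ, Summable (fun j => |t j|) → Summable (fun j => |s j|) →
      t 0 • estar + ∑' k, t (k + 1) • basisv (n k) =
        s 0 • estar + ∑' k, s (k + 1) • basisv (n k) → t = s) ∧
    ∃ T : Z →ₗ[ℝ] ell1,
      (∀ t : ℕ → ℝ, Summable (fun j => |t j|) →
        ∀ h : t 0 • estar + ∑' k, t (k + 1) • basisv (n k) ∈ Z,
          T ⟨t 0 • estar + ∑' k, t (k + 1) • basisv (n k), h⟩ = ∑' k, t k • basisv (n k)) ∧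
      (∀ x, ∀ hx : x ∈ K, ∃ hz : x ∈ Z, T ⟨x, hz⟩ ∈ K ∧ T ⟨x, hz⟩ ≠ x) := by
  intro Z K
  obtain ⟨m, hm, he⟩ := exists_apply_ne_zero_notMem_range hn.injective
    (hsmall.trans_le (div_le_self (norm_nonneg _) (by norm_num)))
  have hinj := fun t s => expansion_inj (e := estar) hn.injective hm he (t := t) (s := s)
  refine ⟨hinj, (shiftOp estar m hn.injective).comp Z.subtype,
    fun t ht _ => shiftOp_expansion hn.injective hm he ht, ?_⟩
  rintro _ ⟨a, ha0, ha, ha1, rfl⟩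
  have habs : Summable fun j => |a j| := by simpa only [abs_of_nonneg (ha0 _)] using ha
  have hshift_abs : Summable fun j => |shiftRight a j| := by
    refine summable_shiftRight_iff.mpr habs |>.congr fun k => ?_
    cases k <;> simp [shiftRight]
  have hT :
      shiftOp estar m hn.injective (expansion estar n a) = expansion estar n (shiftRight a) := by
    rw [shiftOp_expansion hn.injective hm he habs, expansion_shiftRight]
  refine ⟨expansion_mem_closure_span habs, ⟨shiftRight a, ?_, summable_shiftRight_iff.mpr ha,
    by rw [tsum_shiftRight ha, ha1], hT⟩, fun hfix => ?_⟩
  · rintro (_ | k)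
    exacts [le_rfl, ha0 k]
  · obtain rfl := shiftRight_eq_self.mp (hinj _ _ hshift_abs habs (hT.symm.trans hfix))
    simp at ha1

theorem stmt12 (estar : ell1) (h0 : estar ≠ 0) (n : ℕ → ℕ) (hn : StrictMono n)
    (hsmall : ∑' j, |estar (n j)| < ‖estar‖ / 4) :
    let Z : Submodule ℝ ell1 :=
      (Submodule.span ℝ ({estar} ∪ Set.range fun j => basisv (n j))).topologicalClosure
    let K : Set ell1 := {x | ∃ a : ℕ → ℝ, (∀ i, 0 ≤ a i) ∧ Summable a ∧ (∑' i, a i) = 1 ∧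
      x = a 0 • estar + ∑' k, a (k + 1) • basisv (n k)}
    (∀ t s : ℕ → ℝ, Summable (fun j => |t j|) → Summable (fun j => |s j|) →
      t 0 • estar + ∑' k, t (k + 1) • basisv (n k) =
        s 0 • estar + ∑' k, s (k + 1) • basisv (n k) → t = s) ∧
    ∃ T : Z →ₗ[ℝ] ell1,
      (∀ t : ℕ → ℝ, Summable (fun j => |t j|) →
        ∀ h : t 0 • estar + ∑' k, t (k + 1) • basisv (n k) ∈ Z,
          T ⟨t 0 • estar + ∑' k, t (k + 1) • basisv (n k), h⟩ = ∑' k, t k • basisv (n k)) ∧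
      (∀ x, ∀ hx : x ∈ K, ∃ hz : x ∈ Z, T ⟨x, hz⟩ ∈ K ∧ T ⟨x, hz⟩ ≠ x) :=
  stmt12_general estar n hn hsmall
end
end

section
/- Let $\alpha = (-\frac{1}{2}, -\frac{1}{4}, -\frac{1}{8}, \ldots)$, i.e. $\alpha(i) = -2^{-i}$, and $W_\alpha = \{x \in c : \lim_i x(i) = \sum_i \alpha(i)x(i)\}$. Then there is no infinite set $C \subset \{\pm e_n^* : n \in \mathbb{N}\}$ such that the $\sigma(\ell_1, W_\alpha)$-closed convex hull of $C$ is contained in $S_{\ell_1}$, while $\alpha$ itself is a $\sigma(\ell_1, W_\alpha)$-limit point of $\{e_n^*\}$ with $\|\alpha\|_1 = 1$. -/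
open Filter Topology ENNReal NormedSpace

noncomputable section

lemma aux19 : Memℓp (fun i : ℕ => -((1 / 2 : ℝ) ^ (i + 1))) 1 := by
  apply memℓp_gen
  have h : Summable fun i : ℕ => (1 / 2 : ℝ) ^ (i + 1) := by
    have := (summable_geometric_of_lt_one (r := (1/2:ℝ)) (by norm_num)
      (by norm_num)).mul_right (1/2)
    refine this.congr fun i => ?_
    rw [pow_succ]
  refine h.congr fun i => ?_
  rw [ENNReal.toReal_one, Real.rpow_one]
  simp [Real.norm_eq_abs, abs_of_nonneg, pow_nonneg]

/-- The element `α = (-1/2, -1/4, -1/8, ...)` of `ℓ₁`. -/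
def alpha19 : ell1 := ⟨fun i => -((1 / 2 : ℝ) ^ (i + 1)), aux19⟩

/-!
For one sign `s`, infinitely many `s • eₙ` lie in `C`. Every `w ∈ W_α` satisfies
`lim w = ⟨α, w⟩`, i.e. `eₙ → α` weak-star, so the midpoints `(s/2) • (eₘ + eₙ)` of points of `C`
converge to `(s/2) • (eₘ + α)`, which therefore lies in the weak-star closed convex hull of `C`.
As `α(m) < 0`, there is cancellation in `eₘ + α`: `‖eₘ + α‖ < 1 + ‖α‖ = 2`, so this point is
not on the unit sphere.
-/

lemma hasSum_norm_ell1 (y : ell1) : HasSum (fun i => ‖y i‖) ‖y‖ := by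
  simpa using lp.hasSum_norm (p := 1) (by norm_num) y

lemma basisv_apply (n i : ℕ) : basisv n i = if i = n then 1 else 0 := by
  simp [basisv, lp.single_apply, Pi.single_apply]

lemma norm_add_basisv (y : ell1) (m : ℕ) : ‖y + basisv m‖ = ‖y‖ - |y m| + |y m + 1| := by
  have hupd : (fun i => ‖(y + basisv m) i‖) = Function.update (fun i => ‖y i‖) m |y m + 1| := by
    ext i
    rcases eq_or_ne i m with rfl | hi
    · simp [basisv_apply, Real.norm_eq_abs]
    · simp [basisv_apply, hi]
  have h := (hasSum_norm_ell1 y).update m |y m + 1|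
  rw [← hupd, Real.norm_eq_abs] at h
  rw [(hasSum_norm_ell1 _).unique h]
  ring

lemma norm_add_basisv_lt {y : ell1} {m : ℕ} (hy : y m < 0) : ‖y + basisv m‖ < ‖y‖ + 1 := by
  have h : |y m + 1| < 1 - y m := abs_lt.mpr ⟨by linarith, by linarith⟩
  rw [norm_add_basisv, abs_of_neg hy]
  linarith

lemma alpha19_apply_neg (i : ℕ) : alpha19 i < 0 :=
  neg_neg_of_pos (by positivity)

lemma basisv_ne_alpha19 (n : ℕ) : basisv n ≠ alpha19 := fun h => by
  have h' : basisv n n = alpha19 n := by rw [h]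
  rw [basisv_apply, if_pos rfl] at h'
  linarith [alpha19_apply_neg n]

lemma norm_alpha19 : ‖alpha19‖ = 1 := by
  refine (hasSum_norm_ell1 alpha19).unique ((hasSum_geometric_two' 1).congr_fun fun i => ?_)
  show ‖-((1 / 2 : ℝ) ^ (i + 1))‖ = _
  rw [norm_neg, Real.norm_of_nonneg (by positivity), pow_succ, div_pow, one_pow]
  ring

/-- `σ(ℓ₁, W)` for the set `W` of sequences satisfying `P`. -/
def pairingTopology (P : (ℕ → ℝ) → Prop) : TopologicalSpace ell1 :=
  TopologicalSpace.induced (fun y (w : {x : ℕ → ℝ // P x}) => ∑' i, y i * w.1 i) inferInstance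

section pairingTopology

variable {P : (ℕ → ℝ) → Prop}

lemma tendsto_pairingTopology_iff {ι : Type*} {F : Filter ι} {f : ι → ell1} {a : ell1} :
    Tendsto f F (@nhds _ (pairingTopology P) a) ↔ ∀ w : {x : ℕ → ℝ // P x},
      Tendsto (fun n => ∑' i, f n i * w.1 i) F (𝓝 (∑' i, a i * w.1 i)) := by
  rw [pairingTopology, nhds_induced, tendsto_comap_iff, tendsto_pi_nhds]
  rfl

lemma summable_mul_of_bddAbove (y : ell1) {w : ℕ → ℝ} (hw : BddAbove (Set.range fun i => |w i|)) :
    Summable fun i => y i * w i := by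
  obtain ⟨M, hM⟩ := hw
  refine Summable.of_norm_bounded ((hasSum_norm_ell1 y).summable.mul_right M) fun i => ?_
  rw [norm_mul, Real.norm_eq_abs (w i)]
  exact mul_le_mul_of_nonneg_left (hM ⟨i, rfl⟩) (norm_nonneg _)

lemma tsum_smul_add_mul {w : ℕ → ℝ} (hw : BddAbove (Set.range fun i => |w i|))
    (c : ℝ) (b y : ell1) :
    ∑' i, (c • (b + y)) i * w i = c * (∑' i, b i * w i + ∑' i, y i * w i) := by
  rw [← (summable_mul_of_bddAbove b hw).tsum_add (summable_mul_of_bddAbove y hw),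
    ← tsum_mul_left]
  congr 1
  ext i
  simp only [lp.coeFn_smul, lp.coeFn_add, Pi.smul_apply, Pi.add_apply, smul_eq_mul]
  ring

lemma continuous_pairing (w : {x : ℕ → ℝ // P x}) :
    @Continuous ell1 ℝ (pairingTopology P) _ fun y : ell1 => ∑' i, y i * w.1 i := by
  let _ := pairingTopology P
  exact (continuous_apply w).comp
    (continuous_induced_dom (f := fun (y : ell1) (w : {x // P x}) => ∑' i, y i * w.1 i))

lemma continuous_smul_add_pairingTopology (hP : ∀ x, P x → BddAbove (Set.range fun i => |x i|))
    (c : ℝ) (b : ell1) :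
    Continuous[pairingTopology P, pairingTopology P] fun y => c • (b + y) := by
  let _ := pairingTopology P
  refine continuous_induced_rng.mpr (continuous_pi fun w => ?_)
  simp only [Function.comp_apply, tsum_smul_add_mul (hP w.1 w.2)]
  exact continuous_const.mul (continuous_const.add (continuous_pairing w))

lemma tendsto_basisv_pairingTopology {a : ell1}
    (hP : ∀ x, P x → Tendsto x atTop (𝓝 (∑' i, a i * x i))) :
    Tendsto basisv atTop (@nhds _ (pairingTopology P) a) := by
  refine tendsto_pairingTopology_iff.mpr fun w => (hP w.1 w.2).congr fun n => ?_
  simp [basisv_apply]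

end pairingTopology

lemma exists_sign_infinite_smul_basisv_mem {C : Set ell1} (hC : C.Infinite)
    (hCE : C ⊆ {z | ∃ i, z = basisv i ∨ z = -basisv i}) :
    ∃ s : ℝ, |s| = 1 ∧ {n | s • basisv n ∈ C}.Infinite := by
  by_contra! h
  refine hC ((((h 1 (by norm_num)).image fun n => (1 : ℝ) • basisv n).union
    ((h (-1) (by norm_num)).image fun n => (-1 : ℝ) • basisv n)).subset ?_)
  intro z hz
  obtain ⟨i, rfl | rfl⟩ := hCE hz
  · exact Or.inl ⟨i, by simpa using hz, one_smul ℝ _⟩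
  · exact Or.inr ⟨i, by simpa using hz, by simp⟩

lemma smul_add_mem_closure_convexHull {X : Type*} [AddCommGroup X] [Module ℝ X]
    [TopologicalSpace X] {u : ℕ → X} {a : X} (hu : Tendsto u atTop (𝓝 a)) {C : Set X} {s : ℝ}
    (hS : {n | s • u n ∈ C}.Infinite) {m : ℕ} (hm : s • u m ∈ C)
    (hcont : Continuous fun y => (s / 2) • (u m + y)) :
    (s / 2) • (u m + a) ∈ closure (convexHull ℝ C) := by
  refine mem_closure_of_frequently_of_tendsto ?_ ((hcont.tendsto a).comp hu)
  refine (Nat.frequently_atTop_iff_infinite.mpr hS).mono fun n hn => ?_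
  have hmid := convex_convexHull ℝ C (subset_convexHull ℝ C hm) (subset_convexHull ℝ C hn)
    (by norm_num : (0 : ℝ) ≤ 1 / 2) (by norm_num : (0 : ℝ) ≤ 1 / 2) (by norm_num)
  convert hmid using 1
  simp only [Function.comp_apply]
  module

theorem stmt19 :
    let Wmem : (ℕ → ℝ) → Prop := fun x =>
      (∃ L : ℝ, Tendsto x atTop (𝓝 L)) ∧
        Tendsto x atTop (𝓝 (∑' i, (-((1 / 2 : ℝ) ^ (i + 1))) * x i))
    let ws : TopologicalSpace ell1 := TopologicalSpace.induced
      (fun y : ell1 => fun w : {x : ℕ → ℝ // Wmem x} => ∑' i, y i * w.1 i) inferInstance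
    let E : Set ell1 := {z | ∃ i, z = basisv i ∨ z = -basisv i}
    (¬ ∃ C : Set ell1, C.Infinite ∧ C ⊆ E ∧
        @closure _ ws (convexHull ℝ C) ⊆ {y : ell1 | ‖y‖ = 1}) ∧
      alpha19 ∈ @closure _ ws ((Set.range basisv) \ {alpha19}) ∧ ‖alpha19‖ = 1 := by
  intro Wmem ws E
  let _ : TopologicalSpace ell1 := pairingTopology Wmem
  have hbdd : ∀ x, Wmem x → BddAbove (Set.range fun i => |x i|) :=
    fun _ ⟨⟨_, hL⟩, _⟩ => hL.abs.bddAbove_range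
  have hlim : Tendsto basisv atTop (𝓝 alpha19) :=
    tendsto_basisv_pairingTopology fun x hx => hx.2
  refine ⟨?_, mem_closure_of_tendsto hlim
    (Eventually.of_forall fun n => ⟨⟨n, rfl⟩, basisv_ne_alpha19 n⟩), norm_alpha19⟩
  rintro ⟨C, hCinf, hCE, hCsph⟩
  obtain ⟨s, hs, hS⟩ := exists_sign_infinite_smul_basisv_mem hCinf hCE
  obtain ⟨m, hm⟩ := hS.nonempty
  have hz : ‖(s / 2) • (basisv m + alpha19)‖ = 1 := hCsph (smul_add_mem_closure_convexHull
    hlim hS hm (continuous_smul_add_pairingTopology hbdd _ _))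
  have hlt : ‖basisv m + alpha19‖ < 2 := by
    simpa [add_comm, norm_alpha19, one_add_one_eq_two] using
      norm_add_basisv_lt (alpha19_apply_neg m)
  rw [norm_smul, norm_div, Real.norm_eq_abs, hs] at hz
  norm_num at hz
  linarith
end
end
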